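/- arXiv:2305.20057 — 2 statements merged into one kernel-verified Lean document; each statement's English description precedes it below -/
import Mathlib

section
/- Let G ∈ ℝ^{d×M}, ρ > 0, λ* ∈ argmin_{λ ∈ Δ^M} ‖Gλ‖², and λ*_ρ ∈ argmin_{λ ∈ Δ^M} (‖Gλ‖² + ρ‖λ‖²). Then 0 ≤ ‖Gλ*_ρ‖² − ‖Gλ*‖² ≤ ρ(1 − 1/M). -/
/-!
Optimality of `λ*` for the unregularized problem gives the lower bound. Comparing the
regularized objective at `λ*_ρ` and at `λ*` gives
`‖Gλ*_ρ‖² − ‖Gλ*‖² ≤ ρ (‖λ*‖² − ‖λ*_ρ‖²)`, and on the simplex `1/M ≤ ‖λ‖² ≤ 1`.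
-/

namespace EuclideanSpace

variable {ι : Type*} [Fintype ι] {x : EuclideanSpace ℝ ι}

theorem norm_sq_le_one_of_nonneg_of_sum_eq_one (h0 : ∀ i, 0 ≤ x i) (h1 : ∑ i, x i = 1) :
    ‖x‖ ^ 2 ≤ 1 := by
  rw [real_norm_sq_eq, ← h1]
  refine Finset.sum_le_sum fun i _ => ?_
  have hle : x i ≤ 1 := h1 ▸ Finset.single_le_sum (fun j _ => h0 j) (Finset.mem_univ i)
  nlinarith [h0 i]

theorem one_div_card_le_norm_sq_of_sum_eq_one (h1 : ∑ i, x i = 1) :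
    1 / (Fintype.card ι : ℝ) ≤ ‖x‖ ^ 2 := by
  have hcs := sq_sum_le_card_mul_sum_sq (s := Finset.univ) (f := fun i => x i)
  rw [h1, one_pow, Finset.card_univ, ← real_norm_sq_eq] at hcs
  exact div_le_of_le_mul₀ (Nat.cast_nonneg _) (sq_nonneg _) (by linarith)

end EuclideanSpace

theorem regularized_min_norm_gap_general
    {d M : ℕ} (ρ : ℝ) (hρ : 0 < ρ)
    (g : Fin M → EuclideanSpace ℝ (Fin d))
    (lamStar lamRho : EuclideanSpace ℝ (Fin M))
    (hstar_nonneg : ∀ i, 0 ≤ lamStar i) (hstar_sum : ∑ i, lamStar i = 1)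
    (hrho_nonneg : ∀ i, 0 ≤ lamRho i) (hrho_sum : ∑ i, lamRho i = 1)
    (hstar_min : ∀ lam : EuclideanSpace ℝ (Fin M), (∀ i, 0 ≤ lam i) → (∑ i, lam i = 1) →
      ‖∑ m, lamStar m • g m‖ ^ 2 ≤ ‖∑ m, lam m • g m‖ ^ 2)
    (hrho_min : ∀ lam : EuclideanSpace ℝ (Fin M), (∀ i, 0 ≤ lam i) → (∑ i, lam i = 1) →
      ‖∑ m, lamRho m • g m‖ ^ 2 + ρ * ‖lamRho‖ ^ 2
        ≤ ‖∑ m, lam m • g m‖ ^ 2 + ρ * ‖lam‖ ^ 2) :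
    0 ≤ ‖∑ m, lamRho m • g m‖ ^ 2 - ‖∑ m, lamStar m • g m‖ ^ 2 ∧
    ‖∑ m, lamRho m • g m‖ ^ 2 - ‖∑ m, lamStar m • g m‖ ^ 2 ≤ ρ * (1 - 1 / M) := by
  refine ⟨sub_nonneg.2 (hstar_min lamRho hrho_nonneg hrho_sum), ?_⟩
  have hreg := hrho_min lamStar hstar_nonneg hstar_sum
  have hstar := EuclideanSpace.norm_sq_le_one_of_nonneg_of_sum_eq_one hstar_nonneg hstar_sum
  have hrho := EuclideanSpace.one_div_card_le_norm_sq_of_sum_eq_one hrho_sum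
  rw [Fintype.card_fin] at hrho
  calc ‖∑ m, lamRho m • g m‖ ^ 2 - ‖∑ m, lamStar m • g m‖ ^ 2
      ≤ ρ * (‖lamStar‖ ^ 2 - ‖lamRho‖ ^ 2) := by linarith
    _ ≤ ρ * (1 - 1 / M) := by gcongr

/-- Regularization bias: if `λ*` minimizes `‖Gλ‖²` over the simplex and `λ*_ρ`
minimizes `‖Gλ‖² + ρ‖λ‖²` over the simplex, then
`0 ≤ ‖Gλ*_ρ‖² − ‖Gλ*‖² ≤ ρ(1 − 1/M)`. -/
theorem regularized_min_norm_gap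
    {d M : ℕ} (hM : 0 < M) (ρ : ℝ) (hρ : 0 < ρ)
    (g : Fin M → EuclideanSpace ℝ (Fin d))
    (lamStar lamRho : EuclideanSpace ℝ (Fin M))
    (hstar_nonneg : ∀ i, 0 ≤ lamStar i) (hstar_sum : ∑ i, lamStar i = 1)
    (hrho_nonneg : ∀ i, 0 ≤ lamRho i) (hrho_sum : ∑ i, lamRho i = 1)
    (hstar_min : ∀ lam : EuclideanSpace ℝ (Fin M), (∀ i, 0 ≤ lam i) → (∑ i, lam i = 1) →
      ‖∑ m, lamStar m • g m‖ ^ 2 ≤ ‖∑ m, lam m • g m‖ ^ 2)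
    (hrho_min : ∀ lam : EuclideanSpace ℝ (Fin M), (∀ i, 0 ≤ lam i) → (∑ i, lam i = 1) →
      ‖∑ m, lamRho m • g m‖ ^ 2 + ρ * ‖lamRho‖ ^ 2
        ≤ ‖∑ m, lam m • g m‖ ^ 2 + ρ * ‖lam‖ ^ 2) :
    0 ≤ ‖∑ m, lamRho m • g m‖ ^ 2 - ‖∑ m, lamStar m • g m‖ ^ 2 ∧
    ‖∑ m, lamRho m • g m‖ ^ 2 - ‖∑ m, lamStar m • g m‖ ^ 2 ≤ ρ * (1 - 1 / M) :=
  regularized_min_norm_gap_general ρ hρ g lamStar lamRho hstar_nonneg hstar_sum hrho_nonneg hrho_sum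
    hstar_min hrho_min
end

section
/- Let f : ℝ^d → ℝ be μ-strongly convex and L-smooth with minimizer x* satisfying ‖x*‖ ≤ c for some c ≥ 0. Define κ = 3L/μ (so κ ≥ 3) and the gradient step G(x) = x − α∇f(x) with step size 0 ≤ α ≤ 1/L. If ‖x‖ ≤ (1 + √(2κ))·c, then ‖G(x)‖ ≤ (1 + √(2κ))·c. -/
open RealInnerProductSpace

set_option maxHeartbeats 1000000 in
theorem aux_line_deriv {d : ℕ} (f : EuclideanSpace ℝ (Fin d) → ℝ)
    (hdiff : Differentiable ℝ f) (y v : EuclideanSpace ℝ (Fin d)) (t : ℝ) :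
    HasDerivAt (fun t : ℝ => f (y + t • v)) (inner ℝ (gradient f (y + t • v)) v : ℝ) t := by
  have h1 : HasDerivAt (fun t : ℝ => y + t • v) v t := by
    simpa using ((hasDerivAt_id t).smul_const v).const_add y
  have h2 := ((hdiff (y + t • v)).hasGradientAt.hasFDerivAt).comp_hasDerivAt t h1
  exact h2.congr_deriv (by simp [InnerProductSpace.toDual_apply_apply])

set_option maxHeartbeats 1000000 in
theorem aux_descent {d : ℕ} (L : ℝ) (hL : 0 < L)
    (f : EuclideanSpace ℝ (Fin d) → ℝ) (hdiff : Differentiable ℝ f)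
    (hsmooth : ∀ x y : EuclideanSpace ℝ (Fin d),
      ‖gradient f x - gradient f y‖ ≤ L * ‖x - y‖)
    (y z : EuclideanSpace ℝ (Fin d)) :
    f z ≤ f y + (inner ℝ (gradient f y) (z - y) : ℝ) + L / 2 * ‖z - y‖ ^ 2 := by
  set v := z - y with hv
  set g : ℝ → ℝ := fun t =>
      f (y + t • v) - t * (inner ℝ (gradient f y) v : ℝ) - L / 2 * t ^ 2 * ‖v‖ ^ 2 with hg
  have hderiv : ∀ t : ℝ, HasDerivAt g
      ((inner ℝ (gradient f (y + t • v)) v : ℝ) - (inner ℝ (gradient f y) v : ℝ)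
        - L * t * ‖v‖ ^ 2) t := by
    intro t
    have h1 := aux_line_deriv f hdiff y v t
    have h2 : HasDerivAt (fun t : ℝ => t * (inner ℝ (gradient f y) v : ℝ))
        (inner ℝ (gradient f y) v : ℝ) t := by
      simpa using (hasDerivAt_id t).mul_const (inner ℝ (gradient f y) v : ℝ)
    have h3 : HasDerivAt (fun t : ℝ => L / 2 * t ^ 2 * ‖v‖ ^ 2) (L * t * ‖v‖ ^ 2) t := by
      have := ((hasDerivAt_pow 2 t).const_mul (L / 2)).mul_const (‖v‖ ^ 2)
      refine this.congr_deriv ?_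
      ring
    exact (h1.sub h2).sub h3
  have hanti : AntitoneOn g (Set.Icc 0 1) := by
    apply antitoneOn_of_deriv_nonpos (convex_Icc 0 1)
    · exact fun t _ => (hderiv t).differentiableAt.continuousAt.continuousWithinAt
    · exact fun t _ => (hderiv t).differentiableAt.differentiableWithinAt
    · intro t ht
      rw [(hderiv t).deriv]
      rw [interior_Icc] at ht
      have hcs : (inner ℝ (gradient f (y + t • v) - gradient f y) v : ℝ) ≤
          ‖gradient f (y + t • v) - gradient f y‖ * ‖v‖ := real_inner_le_norm _ _
      have hlip : ‖gradient f (y + t • v) - gradient f y‖ ≤ L * (t * ‖v‖) := by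
        have := hsmooth (y + t • v) y
        simpa [norm_smul, abs_of_nonneg ht.1.le] using this
      have h0 : (inner ℝ (gradient f (y + t • v)) v : ℝ) - (inner ℝ (gradient f y) v : ℝ) =
          (inner ℝ (gradient f (y + t • v) - gradient f y) v : ℝ) := by
        rw [inner_sub_left]
      nlinarith [norm_nonneg v, hcs, hlip, h0]
  have h01 := hanti (Set.left_mem_Icc.2 zero_le_one) (Set.right_mem_Icc.2 zero_le_one) zero_le_one
  simp only [hg, zero_smul, add_zero, one_smul] at h01
  have hyz : y + v = z := by simp [hv]
  rw [hyz] at h01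
  nlinarith [h01]

set_option maxHeartbeats 1000000 in
/-- Co-coercivity type inequality -/
theorem aux_cocoercive {d : ℕ} (L : ℝ) (hL : 0 < L)
    (f : EuclideanSpace ℝ (Fin d) → ℝ) (hdiff : Differentiable ℝ f)
    (hconv : ∀ x y : EuclideanSpace ℝ (Fin d),
      f x + (inner ℝ (gradient f x) (y - x) : ℝ) ≤ f y)
    (hsmooth : ∀ x y : EuclideanSpace ℝ (Fin d),
      ‖gradient f x - gradient f y‖ ≤ L * ‖x - y‖)
    (y z : EuclideanSpace ℝ (Fin d)) :
    f y + (inner ℝ (gradient f y) (z - y) : ℝ)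
      + 1 / (2 * L) * ‖gradient f z - gradient f y‖ ^ 2 ≤ f z := by
  set u := gradient f z - gradient f y with hu
  set w := z - (1 / L) • u with hw
  have hdes := aux_descent L hL f hdiff hsmooth z w
  have hcv := hconv y w
  have hwz : w - z = -((1 / L) • u) := by rw [hw]; abel
  have hwy : w - y = (z - y) - (1 / L) • u := by rw [hw]; abel
  rw [hwz] at hdes
  rw [hwy] at hcv
  rw [inner_neg_right, real_inner_smul_right] at hdes
  rw [inner_sub_right, real_inner_smul_right] at hcv
  have hnorm : ‖-((1 / L) • u)‖ ^ 2 = (1 / L) ^ 2 * ‖u‖ ^ 2 := by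
    rw [norm_neg, norm_smul, Real.norm_eq_abs, mul_pow, sq_abs]
  rw [hnorm] at hdes
  have hzu : (inner ℝ (gradient f z) u : ℝ) - (inner ℝ (gradient f y) u : ℝ) = ‖u‖ ^ 2 := by
    rw [← inner_sub_left, ← hu, real_inner_self_eq_norm_sq]
  have hL' : L ≠ 0 := ne_of_gt hL
  have e1 : L / 2 * ((1 / L) ^ 2 * ‖u‖ ^ 2) = 1 / (2 * L) * ‖u‖ ^ 2 := by
    field_simp
  rw [e1] at hdes
  have e3 : 1 / L * (inner ℝ (gradient f z) u : ℝ) - 1 / L * (inner ℝ (gradient f y) u : ℝ)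
      = 1 / L * ‖u‖ ^ 2 := by rw [← mul_sub, hzu]
  have e2 : 1 / L * ‖u‖ ^ 2 - 1 / (2 * L) * ‖u‖ ^ 2 = 1 / (2 * L) * ‖u‖ ^ 2 := by
    field_simp
    ring
  linarith [hdes, hcv, e2, e3]


set_option maxHeartbeats 1000000 in
/-- Invariance of the ball of radius `(1 + √(2κ))·c`, `κ = 3L/μ`, under a gradient
step with step size `0 ≤ α ≤ 1/L`, for a `μ`-strongly convex `L`-smooth function
whose minimizer satisfies `‖x*‖ ≤ c`. -/
theorem gradient_step_ball_invariant
    {d : ℕ} (μ L c α : ℝ) (hμ : 0 < μ) (hμL : μ ≤ L) (hc : 0 ≤ c)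
    (f : EuclideanSpace ℝ (Fin d) → ℝ) (hdiff : Differentiable ℝ f)
    (hsc : ∀ x y : EuclideanSpace ℝ (Fin d),
      f x + ⟪gradient f x, y - x⟫ + μ / 2 * ‖y - x‖ ^ 2 ≤ f y)
    (hsmooth : ∀ x y : EuclideanSpace ℝ (Fin d),
      ‖gradient f x - gradient f y‖ ≤ L * ‖x - y‖)
    (xstar : EuclideanSpace ℝ (Fin d)) (hmin : ∀ y, f xstar ≤ f y)
    (hxstar : ‖xstar‖ ≤ c) (hα0 : 0 ≤ α) (hα : α ≤ 1 / L)
    (x : EuclideanSpace ℝ (Fin d))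
    (hx : ‖x‖ ≤ (1 + Real.sqrt (2 * (3 * L / μ))) * c) :
    ‖x - α • gradient f x‖ ≤ (1 + Real.sqrt (2 * (3 * L / μ))) * c := by
  have hL : 0 < L := lt_of_lt_of_le hμ hμL
  set s : ℝ := Real.sqrt (2 * (3 * L / μ)) with hs
  set g : EuclideanSpace ℝ (Fin d) := gradient f x with hgdef
  set N : ℝ := ‖g‖ with hN
  set D : ℝ := ‖x - xstar‖ with hD
  set r : ℝ := ‖x‖ with hr
  set I : ℝ := (⟪g, x - xstar⟫ : ℝ) with hI
  -- basic facts about s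
  have hs0 : 0 ≤ s := Real.sqrt_nonneg _
  have hs2 : s ^ 2 = 2 * (3 * L / μ) := Real.sq_sqrt (by positivity)
  have hs_ge2 : 2 ≤ s := by
    have h4 : (4 : ℝ) ≤ 2 * (3 * L / μ) := by
      have : (1 : ℝ) ≤ L / μ := (one_le_div hμ).2 hμL
      have : (3 : ℝ) ≤ 3 * L / μ := by
        rw [mul_div_assoc]; linarith
      linarith
    nlinarith [hs2, hs0]
  -- gradient vanishes at the minimizer
  have hg0 : gradient f xstar = 0 := by
    have h : IsLocalMin f xstar := Filter.Eventually.of_forall hmin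
    rw [gradient, h.fderiv_eq_zero, map_zero]
  -- convexity (weakened strong convexity)
  have hconv : ∀ x y : EuclideanSpace ℝ (Fin d),
      f x + (inner ℝ (gradient f x) (y - x) : ℝ) ≤ f y := by
    intro a b
    have := hsc a b
    nlinarith [sq_nonneg ‖b - a‖, hμ.le, this]
  -- strong monotonicity: I ≥ μ D²
  have hmono : μ * D ^ 2 ≤ I := by
    have h1 := hsc x xstar
    have h2 := hsc xstar x
    rw [hg0] at h2
    simp only [inner_zero_left] at h2
    have hxx : (⟪g, xstar - x⟫ : ℝ) = -I := by
      rw [hI, ← inner_neg_right]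
      congr 1
      abel
    rw [hxx] at h1
    have hnrev : ‖xstar - x‖ = D := by rw [hD, norm_sub_rev]
    rw [hnrev] at h1
    linarith
  -- co-coercivity : N² ≤ L * I
  have hcoco : N ^ 2 ≤ L * I := by
    have h1 := aux_cocoercive L hL f hdiff hconv hsmooth xstar x
    have h2 := aux_cocoercive L hL f hdiff hconv hsmooth x xstar
    rw [hg0] at h1 h2
    simp only [inner_zero_left, sub_zero, zero_sub] at h1 h2
    have hxx : (⟪g, xstar - x⟫ : ℝ) = -I := by
      rw [hI, ← inner_neg_right]; congr 1; abel
    rw [← hgdef, hxx] at h2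
    have hng : ‖-g‖ = N := by rw [norm_neg]
    rw [hng] at h2
    rw [← hgdef, ← hN] at h1
    have hsum : 2 * (1 / (2 * L) * N ^ 2) ≤ I := by linarith
    have : 1 / (2 * L) * N ^ 2 * (2 * L) = N ^ 2 := by field_simp
    nlinarith [hsum, hL]
  -- bound on N
  have hND : N ≤ L * D := by
    have := hsmooth x xstar
    rw [hg0, sub_zero] at this
    exact this
  have hN0 : 0 ≤ N := norm_nonneg _
  have hD0 : 0 ≤ D := norm_nonneg _
  have hr0 : 0 ≤ r := norm_nonneg _
  have hrD : r ≤ D + c := by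
    calc r = ‖(x - xstar) + xstar‖ := by rw [hr]; congr 1; abel
    _ ≤ D + ‖xstar‖ := norm_add_le _ _
    _ ≤ D + c := by linarith
  -- expansion of the step norm
  have hexp : ‖x - α • g‖ ^ 2 = r ^ 2 - 2 * (α * (⟪x, g⟫ : ℝ)) + α ^ 2 * N ^ 2 := by
    rw [norm_sub_sq_real, real_inner_smul_right, norm_smul, Real.norm_eq_abs,
      mul_pow, sq_abs, ← hr, ← hN]
  -- inner product bounds
  have hxg : I - N * c ≤ (⟪x, g⟫ : ℝ) := by
    have hsplit : (⟪g, x⟫ : ℝ) = I + (⟪g, xstar⟫ : ℝ) := by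
      rw [hI, inner_sub_right]; ring
    have hCS : |(⟪g, xstar⟫ : ℝ)| ≤ N * c := by
      calc |(⟪g, xstar⟫ : ℝ)| ≤ ‖g‖ * ‖xstar‖ := abs_real_inner_le_norm _ _
      _ ≤ N * c := by
        apply mul_le_mul_of_nonneg_left hxstar hN0 |>.trans_eq rfl
    have := neg_abs_le (⟪g, xstar⟫ : ℝ)
    rw [real_inner_comm, hsplit]
    linarith [abs_le.1 hCS]
  clear_value s g N D r I
  have hαL : α * L ≤ 1 := by
    rw [le_div_iff₀ hL] at hα
    linarith
  -- step 1 : α² N² ≤ α I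
  have hstep1 : α ^ 2 * N ^ 2 ≤ α * I := by
    have hIL : α * N ^ 2 ≤ I := by
      have h1 : α * N ^ 2 ≤ 1 / L * N ^ 2 :=
        mul_le_mul_of_nonneg_right hα (sq_nonneg N)
      have h2 : 1 / L * N ^ 2 ≤ I := by
        rw [div_mul_eq_mul_div, one_mul, div_le_iff₀ hL]
        linarith [hcoco]
      linarith
    calc α ^ 2 * N ^ 2 = α * (α * N ^ 2) := by ring
    _ ≤ α * I := mul_le_mul_of_nonneg_left hIL hα0
  -- key bound: ‖G x‖² ≤ r² - α μ D²/2 + 2 α L c²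
  have hkey : ‖x - α • g‖ ^ 2 ≤ r ^ 2 - α * μ * D ^ 2 / 2 + 2 * α * L * c ^ 2 := by
    have hA : ‖x - α • g‖ ^ 2 ≤ r ^ 2 - α * I + 2 * α * (N * c) := by
      rw [hexp]
      nlinarith [mul_le_mul_of_nonneg_left hxg hα0, hstep1]
    have hB : -(α * I) ≤ -(α * (μ * D ^ 2) / 2) - α * (N ^ 2 / L) / 2 := by
      have h2 : N ^ 2 / L ≤ I := by rw [div_le_iff₀ hL]; linarith [hcoco]
      nlinarith [mul_le_mul_of_nonneg_left hmono hα0, mul_le_mul_of_nonneg_left h2 hα0]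
    have hC : -(α * (N ^ 2 / L) / 2) + 2 * α * (N * c) ≤ 2 * α * L * c ^ 2 := by
      have hsq : 0 ≤ α * (N - 2 * L * c) ^ 2 / (2 * L) := by positivity
      have hexp2 : α * (N - 2 * L * c) ^ 2 / (2 * L)
          = α * (N ^ 2 / L) / 2 - 2 * α * (N * c) + 2 * α * L * c ^ 2 := by
        field_simp
        ring
      linarith [hexp2 ▸ hsq]
    linarith
  -- conclude
  have hR0 : 0 ≤ (1 + s) * c := by positivity
  have hxR : r ≤ (1 + s) * c := hx
  have hfinal : ‖x - α • g‖ ^ 2 ≤ ((1 + s) * c) ^ 2 := by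
    by_cases hcase : 4 * L * c ^ 2 ≤ μ * D ^ 2
    · have hmul := mul_le_mul_of_nonneg_left hcase (by linarith : (0:ℝ) ≤ α / 2)
      have h1 : ‖x - α • g‖ ^ 2 ≤ r ^ 2 := by linarith [hkey, hmul]
      have h2 : r ^ 2 ≤ ((1 + s) * c) ^ 2 := pow_le_pow_left₀ hr0 hxR 2
      linarith
    · push_neg at hcase
      have hD2 : 3 * D ^ 2 ≤ 2 * s ^ 2 * c ^ 2 := by
        have h6 : s ^ 2 * μ = 6 * L := by
          rw [hs2]; field_simp; ring
        have h7 : s ^ 2 * μ * c ^ 2 = 6 * L * c ^ 2 := by rw [h6]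
        have h8 : μ * (3 * D ^ 2) ≤ μ * (2 * s ^ 2 * c ^ 2) := by nlinarith [hcase, h7]
        exact le_of_mul_le_mul_left h8 hμ
      have hG2 : ‖x - α • g‖ ^ 2 ≤ (D + c) ^ 2 + 2 * c ^ 2 := by
        have h1 : r ^ 2 ≤ (D + c) ^ 2 := pow_le_pow_left₀ hr0 hrD 2
        have h2 : 2 * α * L * c ^ 2 ≤ 2 * c ^ 2 := by
          have := mul_le_mul_of_nonneg_right hαL
            (mul_nonneg (by norm_num : (0:ℝ) ≤ 2) (sq_nonneg c))
          linarith [this]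
        linarith [hkey, h1, h2, mul_nonneg (mul_nonneg hα0 hμ.le) (sq_nonneg D)]
      have hpoly : (D + c) ^ 2 + 2 * c ^ 2 ≤ ((1 + s) * c) ^ 2 := by
        linarith [sq_nonneg (D - 2 * c), hD2,
          mul_nonneg (sub_nonneg.2 hs_ge2) (sq_nonneg c)]
      linarith
  have := Real.sqrt_le_sqrt hfinal
  rwa [Real.sqrt_sq (norm_nonneg _), Real.sqrt_sq hR0] at this
end
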